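/- Let K be the three-dimensional complex Lie algebra with basis {x, y, z} and brackets [x, y] = y, [x, z] = −z, [y, z] = 0, and let φ : K → K be the linear map determined by φ(x) = 0, φ(y) = z, φ(z) = 0. Then for every odd integer N ≥ 3, φ is an N-derivation of K: φ([x_1, …, x_N]) = Σ_{i=1}^{N} [x_1, …, x_{i-1}, φ(x_i), x_{i+1}, …, x_N] for all x_1, …, x_N ∈ K. -/

import Mathlib

open scoped BigOperators

/-- Right-iterated Lie bracket `[x₁, x₂, …, xₖ] = [x₁, [x₂, [… [x_{k-1}, xₖ] …]]]`. -/
def itBracket {L : Type*} [LieRing L] : List L → L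
  | [] => 0
  | [a] => a
  | a :: b :: l => ⁅a, itBracket (b :: l)⁆

/-- `φ` is an `N`-derivation of the Lie algebra `L`:
`φ [x₁, …, x_N] = ∑ i, [x₁, …, x_{i-1}, φ xᵢ, x_{i+1}, …, x_N]`. -/
def IsNDeriv (F : Type*) {L : Type*} [CommRing F] [LieRing L] [LieAlgebra F L]
    (N : ℕ) (φ : L →ₗ[F] L) : Prop :=
  ∀ x : Fin N → L,
    φ (itBracket (List.ofFn x)) =
      ∑ i : Fin N, itBracket (List.ofFn (Function.update x i (φ (x i))))

lemma itBracket_cons {L : Type*} [LieRing L] (a : L) (l : List L) (hl : l ≠ []) :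
    itBracket (a :: l) = ⁅a, itBracket l⁆ := by
  cases l with
  | nil => simp at hl
  | cons b t => rfl

/-- Let `K` be the three-dimensional complex Lie algebra with basis `{x, y, z}` and brackets
`[x,y] = y`, `[x,z] = -z`, `[y,z] = 0`, and let `φ` be the linear map with `φ x = 0`,
`φ y = z`, `φ z = 0`.  Then for every odd `N ≥ 3`, `φ` is an `N`-derivation of `K`. -/
theorem example_isNDeriv
    (K : Type*) [LieRing K] [LieAlgebra ℂ K] (B : Module.Basis (Fin 3) ℂ K)
    (hxy : ⁅B 0, B 1⁆ = B 1) (hxz : ⁅B 0, B 2⁆ = -B 2) (hyz : ⁅B 1, B 2⁆ = 0)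
    (φ : K →ₗ[ℂ] K) (hφx : φ (B 0) = 0) (hφy : φ (B 1) = B 2) (hφz : φ (B 2) = 0)
    (N : ℕ) (hN : 3 ≤ N) (hodd : Odd N) :
    IsNDeriv ℂ N φ := by
  have h10 : ⁅B 1, B 0⁆ = -B 1 := by rw [← lie_skew, hxy]
  have h20 : ⁅B 2, B 0⁆ = B 2 := by rw [← lie_skew, hxz]; simp
  have h21 : ⁅B 2, B 1⁆ = 0 := by rw [← lie_skew, hyz]; simp
  -- key1 : φ is a (-1)-derivation
  have key1 : ∀ a b : K, φ ⁅a, b⁆ = -⁅φ a, b⁆ - ⁅a, φ b⁆ := by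
    set f : K →ₗ[ℂ] K →ₗ[ℂ] K := LinearMap.mk₂ ℂ
      (fun a b => φ ⁅a, b⁆ + ⁅φ a, b⁆ + ⁅a, φ b⁆)
      (fun a a' b => by simp [add_lie, lie_add, map_add]; abel)
      (fun c a b => by simp [smul_lie, lie_smul, map_smul, smul_add])
      (fun a b b' => by simp [add_lie, lie_add, map_add]; abel)
      (fun c a b => by simp [smul_lie, lie_smul, map_smul, smul_add]) with hf
    have : f = 0 := by
      apply B.ext; intro i
      apply B.ext; intro j
      fin_cases i <;> fin_cases j <;>
        simp [hf, LinearMap.mk₂_apply, hxy, hxz, hyz, h10, h20, h21,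
          hφx, hφy, hφz, lie_self]
    intro a b
    have h2 : f a b = 0 := by rw [this]; rfl
    simp only [hf, LinearMap.mk₂_apply] at h2
    linear_combination (norm := module) h2
  -- φ takes values in the span of B 2
  have hφform : ∀ a : K, φ a = (B.repr a 1) • B 2 := by
    intro a
    have : φ = (B.coord 1).smulRight (B 2) := by
      apply B.ext; intro i
      fin_cases i <;>
        simp [hφx, hφy, hφz, Module.Basis.coord_apply, Module.Basis.repr_self, Finsupp.single_apply]
    rw [this]; rfl
  -- ⁅B 2, ⁅b, c⁆⁆ = 0
  have hz : ∀ b c : K, ⁅B 2, ⁅b, c⁆⁆ = (0 : K) := by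
    set g : K →ₗ[ℂ] K →ₗ[ℂ] K := LinearMap.mk₂ ℂ
      (fun b c => ⁅B 2, ⁅b, c⁆⁆)
      (fun a a' b => by simp [add_lie, lie_add])
      (fun c a b => by simp [smul_lie, lie_smul])
      (fun a b b' => by simp [add_lie, lie_add])
      (fun c a b => by simp [smul_lie, lie_smul]) with hg
    have : g = 0 := by
      apply B.ext; intro i
      apply B.ext; intro j
      fin_cases i <;> fin_cases j <;>
        simp [hg, LinearMap.mk₂_apply, hxy, hxz, hyz, h10, h20, h21, lie_self, h21]
    intro b c
    have h2 : g b c = 0 := by rw [this]; rfl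
    simpa [hg, LinearMap.mk₂_apply] using h2
  have key2 : ∀ a b c : K, ⁅φ a, ⁅b, c⁆⁆ = (0 : K) := by
    intro a b c
    rw [hφform a, smul_lie, hz, smul_zero]
  -- main induction
  have main : ∀ n, 2 ≤ n → ∀ x : Fin n → K,
      φ (itBracket (List.ofFn x)) =
        ((-1 : ℂ) ^ (n - 1)) •
          ∑ i : Fin n, itBracket (List.ofFn (Function.update x i (φ (x i)))) := by
    intro n hn2
    induction n, hn2 using Nat.le_induction with
    | base =>
      intro x
      have ofFn2 : ∀ f : Fin 2 → K, List.ofFn f = [f 0, f 1] := fun f => by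
        simp [List.ofFn_succ]
      have e2 : List.ofFn (Function.update x 0 (φ (x 0))) = [φ (x 0), x 1] := by
        rw [ofFn2, Function.update_self, Function.update_of_ne (by decide)]
      have e3 : List.ofFn (Function.update x 1 (φ (x 1))) = [x 0, φ (x 1)] := by
        rw [ofFn2, Function.update_self, Function.update_of_ne (by decide)]
      rw [ofFn2 x, Fin.sum_univ_two, e2, e3]
      show φ ⁅x 0, x 1⁆ = ((-1:ℂ)^(2-1)) • (⁅φ (x 0), x 1⁆ + ⁅x 0, φ (x 1)⁆)
      rw [key1, show ((-1:ℂ)^(2-1)) = -1 by norm_num, neg_smul, one_smul, neg_add]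
      abel
    | succ n hn ih =>
      intro x
      obtain ⟨m, rfl⟩ : ∃ m, n = m + 1 := ⟨n - 1, by omega⟩
      set y : Fin (m + 1) → K := fun i => x i.succ with hy
      have hne : List.ofFn y ≠ [] := by
        intro hc; have := congrArg List.length hc; simp at this
      have hofn : List.ofFn x = x 0 :: List.ofFn y := by
        rw [List.ofFn_succ, ← hy]
      -- W is a genuine bracket, so ⁅φ a, W⁆ = 0
      have hW : itBracket (List.ofFn y) =
          ⁅y 0, itBracket (List.ofFn fun i : Fin m => y i.succ)⁆ := by
        rw [List.ofFn_succ, itBracket_cons]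
        intro hc; have := congrArg List.length hc; simp at this; omega
      have hterm0 : ⁅φ (x 0), itBracket (List.ofFn y)⁆ = 0 := by
        rw [hW]; exact key2 _ _ _
      have lhs : φ (itBracket (List.ofFn x)) =
          -⁅x 0, φ (itBracket (List.ofFn y))⁆ := by
        rw [hofn, itBracket_cons _ _ hne, key1, hterm0]
        simp
      rw [lhs, ih y]
      conv_rhs => rw [Fin.sum_univ_succ]
      have e0 : List.ofFn (Function.update x 0 (φ (x 0))) = φ (x 0) :: List.ofFn y := by
        have hhead : Function.update x 0 (φ (x 0)) 0 = φ (x 0) :=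
          Function.update_self _ _ _
        have htail : (fun i : Fin (m + 1) => Function.update x 0 (φ (x 0)) i.succ) = y := by
          funext i
          rw [Function.update_of_ne (Fin.succ_ne_zero i), hy]
        rw [List.ofFn_succ, hhead, htail]
      have es : ∀ j : Fin (m + 1),
          List.ofFn (Function.update x j.succ (φ (x j.succ))) =
            x 0 :: List.ofFn (Function.update y j (φ (y j))) := by
        intro j
        have hhead : Function.update x j.succ (φ (x j.succ)) 0 = x 0 :=
          Function.update_of_ne (Fin.succ_ne_zero j).symm _ _
        have htail : (fun i : Fin (m + 1) => Function.update x j.succ (φ (x j.succ)) i.succ)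
            = Function.update y j (φ (y j)) := by
          funext i
          by_cases h : i = j
          · subst h
            simp [hy]
          · have h' : i.succ ≠ j.succ := fun hc => h (Fin.succ_injective _ hc)
            rw [Function.update_of_ne h', Function.update_of_ne h, hy]
        rw [List.ofFn_succ, hhead, htail]
      have hterm0' : itBracket (List.ofFn (Function.update x 0 (φ (x 0)))) = 0 := by
        rw [e0, itBracket_cons _ _ hne, hterm0]
      rw [hterm0', zero_add]
      have hrw : ∀ j : Fin (m + 1),
          itBracket (List.ofFn (Function.update x j.succ (φ (x j.succ)))) =
            ⁅x 0, itBracket (List.ofFn (Function.update y j (φ (y j))))⁆ := by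
        intro j
        rw [es j, itBracket_cons]
        intro hc; have := congrArg List.length hc; simp at this
      simp only [hrw]
      have lsum : ⁅x 0, ∑ i : Fin (m + 1),
            itBracket (List.ofFn (Function.update y i (φ (y i))))⁆ =
          ∑ i : Fin (m + 1),
            ⁅x 0, itBracket (List.ofFn (Function.update y i (φ (y i))))⁆ :=
        map_sum (AddMonoidHom.mk' (fun w => ⁅x 0, w⁆) (lie_add (x 0))) _ _
      rw [lie_smul, lsum, ← neg_smul]
      congr 1
      rw [show m + 1 + 1 - 1 = (m + 1 - 1) + 1 from by omega, pow_succ]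
      ring
  -- conclude
  intro x
  rw [main N (by omega) x]
  have : ((-1 : ℂ)) ^ (N - 1) = 1 := by
    have : Even (N - 1) := by
      rcases hodd with ⟨k, hk⟩
      exact ⟨k, by omega⟩
    exact this.neg_one_pow
  rw [this, one_smul]
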